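/- arXiv:math/0108035 — 6 statements merged into one kernel-verified Lean document; each statement's English description precedes it below -/
import Mathlib

section
/- The double integral ∫_𝔻 ∫_𝔻 1/|1 − z·conj(w)|² dλ(z) dλ(w) is finite, where both integrations are over the open unit disc 𝔻 ⊂ ℂ. -/
/-!
For `z, w` in the disc, `|1 - z w̄|` dominates both `|z - w|` (by the identity
`|1 - z w̄|² = |z - w|² + (1 - |z|²)(1 - |w|²)`) and `1 - |w|`. Splitting the exponent `2` as
`1/2 + 3/2` gives `|1 - z w̄|⁻² ≤ (1 - |w|)^(-1/2) |z - w|^(-3/2)`. The singularity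
`|z - w|^(-3/2)` is integrable in the plane uniformly in `w`, and `(1 - |w|)^(-1/2)` is integrable
over the disc, both exponents being below the critical ones (`2` and `1`).
-/

open MeasureTheory Metric Complex
open scoped ENNReal ComplexConjugate

lemma normSq_one_sub_mul_conj (z w : ℂ) :
    normSq (1 - z * conj w) = normSq (z - w) + (1 - normSq z) * (1 - normSq w) := by
  simp only [normSq_apply, sub_re, sub_im, one_re, one_im, mul_re, mul_im, conj_re, conj_im]
  ring

lemma norm_sub_le_norm_one_sub_mul_conj {z w : ℂ} (hz : ‖z‖ ≤ 1) (hw : ‖w‖ ≤ 1) :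
    ‖z - w‖ ≤ ‖1 - z * conj w‖ := by
  have hz' : normSq z ≤ 1 := by rw [← Complex.sq_norm]; exact pow_le_one₀ (norm_nonneg z) hz
  have hw' : normSq w ≤ 1 := by rw [← Complex.sq_norm]; exact pow_le_one₀ (norm_nonneg w) hw
  rw [← pow_le_pow_iff_left₀ (norm_nonneg _) (norm_nonneg _) two_ne_zero, Complex.sq_norm,
    Complex.sq_norm, normSq_one_sub_mul_conj]
  nlinarith

lemma one_sub_norm_le_norm_one_sub_mul_conj {z w : ℂ} (hz : ‖z‖ ≤ 1) :
    1 - ‖w‖ ≤ ‖1 - z * conj w‖ := by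
  calc 1 - ‖w‖ ≤ 1 - ‖z * conj w‖ := by
        rw [norm_mul, norm_conj]
        gcongr
        exact mul_le_of_le_one_left (norm_nonneg w) hz
    _ ≤ ‖1 - z * conj w‖ := by simpa using norm_sub_norm_le (1 : ℂ) (z * conj w)

lemma inv_rpow_add_le_rpow_neg_mul_rpow_neg {a b c p q : ℝ} (ha : 0 < a) (hac : a ≤ c)
    (hb : 0 < b) (hbc : b ≤ c) (hp : 0 ≤ p) (hq : 0 ≤ q) :
    (c ^ (p + q))⁻¹ ≤ a ^ (-p) * b ^ (-q) := by
  rw [Real.rpow_add (ha.trans_le hac), Real.rpow_neg ha.le, Real.rpow_neg hb.le, ← mul_inv]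
  exact inv_anti₀ (by positivity) (mul_le_mul (Real.rpow_le_rpow ha.le hac hp)
    (Real.rpow_le_rpow hb.le hbc hq) (Real.rpow_nonneg hb.le q)
    (Real.rpow_nonneg (ha.le.trans hac) p))

lemma one_div_norm_one_sub_mul_conj_sq_le {z w : ℂ} (hz : ‖z‖ ≤ 1) (hw : ‖w‖ < 1)
    (hzw : z ≠ w) :
    1 / ‖1 - z * conj w‖ ^ 2 ≤
      (1 - ‖w‖) ^ (-(1 / 2 : ℝ)) * ‖z - w‖ ^ (-(3 / 2 : ℝ)) := by
  have key := inv_rpow_add_le_rpow_neg_mul_rpow_neg (sub_pos.2 hw)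
    (one_sub_norm_le_norm_one_sub_mul_conj hz) (norm_pos_iff.2 (sub_ne_zero.2 hzw))
    (norm_sub_le_norm_one_sub_mul_conj hz hw.le) (p := 1 / 2) (q := 3 / 2)
    (by norm_num) (by norm_num)
  norm_num at key
  simpa [one_div] using key

section Translation

variable {E : Type*} [NormedAddCommGroup E] [MeasurableSpace E] [BorelSpace E]
  {μ : Measure E} [μ.IsAddRightInvariant]

lemma setLIntegral_ball_comp_sub_le (f : E → ℝ≥0∞) (w : E) (r : ℝ) :
    ∫⁻ z in ball 0 r, f (z - w) ∂μ ≤ ∫⁻ z in ball 0 (r + ‖w‖), f z ∂μ := by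
  calc ∫⁻ z in ball 0 r, f (z - w) ∂μ
      ≤ ∫⁻ z in (· - w) ⁻¹' ball 0 (r + ‖w‖), f (z - w) ∂μ := by
        refine lintegral_mono_set fun z hz => ?_
        simpa [dist_eq_norm] using (norm_sub_le z w).trans_lt (by gcongr; simpa using hz)
    _ = _ := (measurePreserving_sub_right μ w).setLIntegral_comp_preimage_emb
        (measurableEmbedding_subRight w) f _

end Translation

section Integrability

variable {E : Type*} [NormedAddCommGroup E] [NormedSpace ℝ E] [FiniteDimensional ℝ E]
  [MeasurableSpace E] [BorelSpace E] [Nontrivial E] (μ : Measure E) [μ.IsAddHaarMeasure]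

lemma integrableOn_ball_norm_rpow_neg {s : ℝ} (hs : s < Module.finrank ℝ E) (r : ℝ) :
    IntegrableOn (fun x : E => ‖x‖ ^ (-s)) (ball 0 r) μ :=
  integrableOn_ball_of_norm_le_rpow (C := 1) Module.finrank_pos hs
    (ae_of_all _ fun x => by simp [abs_of_nonneg (Real.rpow_nonneg (norm_nonneg x) _)])
    (measurable_norm.pow_const _).aestronglyMeasurable

lemma integrableOn_ball_one_sub_norm_rpow {s : ℝ} (hs : -1 < s) :
    IntegrableOn (fun x : E => (1 - ‖x‖) ^ s) (ball 0 1) μ := by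
  rw [integrableOn_fun_norm_addHaar μ (f := fun y => (1 - y) ^ s)]
  have h : IntegrableOn (fun y : ℝ => (1 - y) ^ s) (Set.Ioo 0 1) := by
    have := (intervalIntegral.intervalIntegrable_rpow' (a := 0) (b := 1) hs).comp_sub_left 1
    simp only [sub_zero, sub_self] at this
    exact this.symm.1.mono_set Set.Ioo_subset_Ioc_self
  refine h.mono' (by fun_prop) ((ae_restrict_iff' measurableSet_Ioo).2 (ae_of_all _ ?_))
  rintro y ⟨hy0, hy1⟩
  rw [norm_smul, Real.norm_of_nonneg (Real.rpow_nonneg (by linarith) s)]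
  refine mul_le_of_le_one_left (Real.rpow_nonneg (by linarith) s) ?_
  rw [Real.norm_of_nonneg (by positivity)]
  exact pow_le_one₀ hy0.le hy1.le

end Integrability

lemma lintegral_ball_one_div_norm_one_sub_mul_conj_sq_le {w : ℂ} (hw : ‖w‖ < 1) :
    ∫⁻ z in ball 0 1, ENNReal.ofReal (1 / ‖1 - z * conj w‖ ^ 2) ≤
      ENNReal.ofReal ((1 - ‖w‖) ^ (-(1 / 2 : ℝ))) *
        ∫⁻ z in ball (0 : ℂ) 2, ENNReal.ofReal (‖z‖ ^ (-(3 / 2 : ℝ))) := by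
  calc ∫⁻ z in ball 0 1, ENNReal.ofReal (1 / ‖1 - z * conj w‖ ^ 2)
      ≤ ∫⁻ z in ball 0 1, ENNReal.ofReal ((1 - ‖w‖) ^ (-(1 / 2 : ℝ))) *
          ENNReal.ofReal (‖z - w‖ ^ (-(3 / 2 : ℝ))) := by
        -- `z = w` must be discarded: there `Real.rpow` makes `‖z - w‖ ^ (-3/2)` vanish.
        refine lintegral_mono_ae ?_
        filter_upwards [ae_restrict_mem measurableSet_ball,
          ae_restrict_of_ae (Measure.ae_ne volume w)] with z hz hzw
        rw [← ENNReal.ofReal_mul (Real.rpow_nonneg (by linarith) _)]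
        exact ENNReal.ofReal_le_ofReal
          (one_div_norm_one_sub_mul_conj_sq_le (mem_ball_zero_iff.1 hz).le hw hzw)
    _ = ENNReal.ofReal ((1 - ‖w‖) ^ (-(1 / 2 : ℝ))) *
          ∫⁻ z in ball 0 1, ENNReal.ofReal (‖z - w‖ ^ (-(3 / 2 : ℝ))) :=
        lintegral_const_mul' _ _ ENNReal.ofReal_ne_top
    _ ≤ _ := by
        refine mul_le_mul_right ?_ _
        calc ∫⁻ z in ball 0 1, ENNReal.ofReal (‖z - w‖ ^ (-(3 / 2 : ℝ)))
            ≤ ∫⁻ z in ball 0 (1 + ‖w‖), ENNReal.ofReal (‖z‖ ^ (-(3 / 2 : ℝ))) :=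
              setLIntegral_ball_comp_sub_le _ w 1
          _ ≤ _ := lintegral_mono_set (ball_subset_ball (by linarith))

/-- `∫_𝔻 ∫_𝔻 1/|1 − z·conj w|² dλ(z) dλ(w) < ∞`. -/
theorem integral_one_div_abs_one_sub_mul_conj_sq_lt_top :
    (∫⁻ w in Metric.ball (0 : ℂ) 1, ∫⁻ z in Metric.ball (0 : ℂ) 1,
      ENNReal.ofReal (1 / ‖1 - z * (starRingEnd ℂ) w‖ ^ 2)) < ⊤ := by
  have hK : ∫⁻ z in ball (0 : ℂ) 2, ENNReal.ofReal (‖z‖ ^ (-(3 / 2 : ℝ))) < ⊤ :=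
    (integrableOn_ball_norm_rpow_neg volume
      (by norm_num [Complex.finrank_real_complex]) 2).lintegral_lt_top
  have hW : ∫⁻ w in ball (0 : ℂ) 1, ENNReal.ofReal ((1 - ‖w‖) ^ (-(1 / 2 : ℝ))) < ⊤ :=
    (integrableOn_ball_one_sub_norm_rpow volume (by norm_num)).lintegral_lt_top
  calc _ ≤ ∫⁻ w in ball (0 : ℂ) 1, ENNReal.ofReal ((1 - ‖w‖) ^ (-(1 / 2 : ℝ))) *
          ∫⁻ z in ball (0 : ℂ) 2, ENNReal.ofReal (‖z‖ ^ (-(3 / 2 : ℝ))) :=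
        setLIntegral_mono' measurableSet_ball fun w hw =>
          lintegral_ball_one_div_norm_one_sub_mul_conj_sq_le (mem_ball_zero_iff.1 hw)
    _ = (∫⁻ w in ball (0 : ℂ) 1, ENNReal.ofReal ((1 - ‖w‖) ^ (-(1 / 2 : ℝ)))) *
          ∫⁻ z in ball (0 : ℂ) 2, ENNReal.ofReal (‖z‖ ^ (-(3 / 2 : ℝ))) :=
        lintegral_mul_const' _ _ hK.ne
    _ < ⊤ := ENNReal.mul_lt_top hW hK
end

section
/- The series ∑_{n=0}^{∞} ∫_𝔻 | √((n+1)/π)·zⁿ·conj(z) − (n/√((n+1)π))·z^{n−1} |² dλ(z) converges (its value is ∑ₙ 1/((n+1)(n+2)) = 1). Consequently the canonical solution operator to ∂̄ restricted to (0,1)-forms with holomorphic coefficients on the unit disc, which sends the orthonormal basis element uₙ dz̄ with uₙ(z) = √((n+1)/π)·zⁿ to the function z ↦ √((n+1)/π)·zⁿ·conj(z) − (n/√((n+1)π))·z^{n−1}, is a Hilbert–Schmidt operator from A²_{(0,1)}(𝔻) to L²(𝔻). -/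
/-!
For `n ≥ 1` the integrand is radial: with `a = √((n+1)/π)` and `b = n/√((n+1)π)` one has
`a zⁿ z̄ − b zⁿ⁻¹ = zⁿ⁻¹ (a|z|² − b)`, so its squared modulus is a polynomial in `|z|`.
Polar coordinates give `∫_𝔻 |z|ᵏ dλ = 2π/(k+2)`, from which the `n`-th term of the series is
`1/((n+1)(n+2)) = 1/(n+1) − 1/(n+2)`, and the series telescopes to `1`.
-/

open MeasureTheory Metric Set Filter Topology

section UnitBall

variable {E : Type*} [NormedAddCommGroup E] [NormedSpace ℝ E] [MeasurableSpace E] [BorelSpace E]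
  [FiniteDimensional ℝ E] (μ : Measure E) [μ.IsAddHaarMeasure]

theorem integrableOn_norm_pow_ball (m : ℕ) (r : ℝ) :
    IntegrableOn (fun x : E => ‖x‖ ^ m) (ball 0 r) μ :=
  ((continuous_norm.pow m).continuousOn.integrableOn_compact (isCompact_closedBall 0 r)).mono_set
    ball_subset_closedBall

theorem setIntegral_norm_pow_ball_one [Nontrivial E] (m : ℕ) :
    ∫ x in ball (0 : E) 1, ‖x‖ ^ m ∂μ =
      Module.finrank ℝ E / (m + Module.finrank ℝ E) * μ.real (ball 0 1) := by
  obtain ⟨k, hk⟩ := Nat.exists_eq_add_one_of_ne_zero (Module.finrank_pos (R := ℝ) (M := E)).ne'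
  have hpolar := integral_fun_norm_addHaar μ ((Iio (1 : ℝ)).indicator (· ^ m))
  have hball : (fun x : E => (Iio (1 : ℝ)).indicator (· ^ m) ‖x‖) =
      (ball (0 : E) 1).indicator (‖·‖ ^ m) := by
    ext x
    by_cases h : ‖x‖ < 1 <;> simp [h]
  have hradial : ∫ y in Ioi (0 : ℝ), y ^ k • (Iio 1).indicator (· ^ m) y = 1 / (m + k + 1) := by
    have hmul : (fun y : ℝ => y ^ k • (Iio 1).indicator (· ^ m) y) =
        (Iio 1).indicator (· ^ (m + k)) := by
      ext y
      by_cases h : y < 1 <;> simp [h, pow_add, mul_comm]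
    rw [hmul, integral_indicator measurableSet_Iio, Measure.restrict_restrict measurableSet_Iio,
      Iio_inter_Ioi, ← integral_Ioc_eq_integral_Ioo, ← intervalIntegral.integral_of_le zero_le_one,
      integral_pow]
    push_cast
    ring
  rw [hball, integral_indicator measurableSet_ball, hk, Nat.add_sub_cancel, hradial] at hpolar
  rw [hpolar, hk, nsmul_eq_mul, smul_eq_mul]
  push_cast
  field_simp
  ring

end UnitBall

namespace Complex

theorem setIntegral_norm_pow_ball_one (m : ℕ) :
    ∫ z in ball (0 : ℂ) 1, ‖z‖ ^ m = 2 * Real.pi / (m + 2) := by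
  rw [_root_.setIntegral_norm_pow_ball_one, finrank_real_complex, Measure.real, volume_ball]
  simp only [Nat.cast_ofNat, ENNReal.ofReal_one, one_pow, one_mul, ENNReal.coe_toReal,
    NNReal.coe_real_pi]
  ring

theorem norm_sq_ofReal_mul_pow_succ_mul_conj_sub (a b : ℝ) (m : ℕ) (z : ℂ) :
    ‖(a : ℂ) * z ^ (m + 1) * (starRingEnd ℂ) z - b * z ^ m‖ ^ 2 =
      ‖z‖ ^ (2 * m) * (a * ‖z‖ ^ 2 - b) ^ 2 := by
  have hfactor : (a : ℂ) * z ^ (m + 1) * (starRingEnd ℂ) z - b * z ^ m =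
      z ^ m * ((a * ‖z‖ ^ 2 - b : ℝ) : ℂ) := by
    push_cast
    rw [← mul_conj']
    ring
  rw [hfactor, norm_mul, norm_pow, norm_real, Real.norm_eq_abs, mul_pow, sq_abs, ← pow_mul,
    mul_comm m]

theorem setIntegral_norm_pow_mul_sq_ball_one (a b : ℝ) (m : ℕ) :
    ∫ z in ball (0 : ℂ) 1, ‖z‖ ^ (2 * m) * (a * ‖z‖ ^ 2 - b) ^ 2 =
      Real.pi * (a ^ 2 / (m + 3) - 2 * a * b / (m + 2) + b ^ 2 / (m + 1)) := by
  have hexpand (z : ℂ) : ‖z‖ ^ (2 * m) * (a * ‖z‖ ^ 2 - b) ^ 2 =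
      a ^ 2 * ‖z‖ ^ (2 * m + 4) - 2 * a * b * ‖z‖ ^ (2 * m + 2) + b ^ 2 * ‖z‖ ^ (2 * m) := by
    ring
  have hint (c : ℝ) (k : ℕ) : IntegrableOn (fun z : ℂ => c * ‖z‖ ^ k) (ball 0 1) :=
    (integrableOn_norm_pow_ball volume k 1).const_mul c
  simp_rw [hexpand]
  rw [integral_add ?_ (hint _ _), integral_sub (hint _ _) (hint _ _),
    integral_const_mul, integral_const_mul, integral_const_mul,
    setIntegral_norm_pow_ball_one, setIntegral_norm_pow_ball_one, setIntegral_norm_pow_ball_one]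
  · push_cast
    field_simp
    ring
  · exact (hint _ _).sub (hint _ _)

end Complex

theorem Real.hasSum_sub_succ_of_antitone {f : ℕ → ℝ} {l : ℝ} (hf : Antitone f)
    (hl : Tendsto f atTop (𝓝 l)) : HasSum (fun n => f n - f (n + 1)) (f 0 - l) := by
  rw [hasSum_iff_tendsto_nat_of_nonneg fun n => sub_nonneg.2 (hf n.le_succ)]
  simp_rw [Finset.sum_range_sub']
  exact tendsto_const_nhds.sub hl

theorem hasSum_one_div_succ_mul_succ_succ :
    HasSum (fun n : ℕ => 1 / (((n : ℝ) + 1) * ((n : ℝ) + 2))) 1 := by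
  have h := Real.hasSum_sub_succ_of_antitone (f := fun n : ℕ => 1 / ((n : ℝ) + 1))
    (fun m n hmn => by simp only; gcongr) tendsto_one_div_add_atTop_nhds_zero_nat
  convert h using 1
  · ext n
    push_cast
    field_simp
    ring
  · simp

theorem setIntegral_norm_sq_canonical_solution_disc (n : ℕ) :
    ∫ z in ball (0 : ℂ) 1,
        ‖((Real.sqrt (((n : ℝ) + 1) / Real.pi) : ℂ) * z ^ n * (starRingEnd ℂ) z -
          ((n : ℂ) / (Real.sqrt (((n : ℝ) + 1) * Real.pi) : ℂ)) * z ^ (n - 1))‖ ^ 2 =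
      1 / (((n : ℝ) + 1) * ((n : ℝ) + 2)) := by
  have hpi := Real.pi_pos
  rcases n with _ | m
  · have hnorm (z : ℂ) :
        ‖(Real.sqrt ((((0 : ℕ) : ℝ) + 1) / Real.pi) : ℂ) * z ^ 0 * (starRingEnd ℂ) z -
          (((0 : ℕ) : ℂ) / (Real.sqrt ((((0 : ℕ) : ℝ) + 1) * Real.pi) : ℂ)) * z ^ (0 - 1)‖ ^ 2 =
        1 / Real.pi * ‖z‖ ^ 2 := by
      simp [mul_pow, Real.sq_sqrt hpi.le]
    simp_rw [hnorm]
    rw [integral_const_mul, Complex.setIntegral_norm_pow_ball_one]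
    field_simp
    norm_num
  · have hsucc : ((m + 1 : ℕ) : ℝ) + 1 = m + 2 := by push_cast; ring
    have hcoeff : ((m + 1 : ℕ) : ℂ) / (Real.sqrt ((m + 2) * Real.pi) : ℂ) =
        (((m + 1) / Real.sqrt ((m + 2) * Real.pi) : ℝ) : ℂ) := by
      push_cast
      ring
    simp_rw [hsucc, hcoeff, Nat.add_sub_cancel, Complex.norm_sq_ofReal_mul_pow_succ_mul_conj_sub,
      Complex.setIntegral_norm_pow_mul_sq_ball_one]
    set a := Real.sqrt ((m + 2) / Real.pi)
    set b := (m + 1) / Real.sqrt ((m + 2) * Real.pi)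
    have ha : a ^ 2 = (m + 2) / Real.pi := Real.sq_sqrt (by positivity)
    have hb : b ^ 2 = (m + 1) ^ 2 / ((m + 2) * Real.pi) := by
      rw [div_pow, Real.sq_sqrt (by positivity)]
    have hab : a * b = (m + 1) / Real.pi := by
      have : 0 < Real.sqrt (m + 2) := by positivity
      simp only [a, b]
      rw [Real.sqrt_div' _ hpi.le, Real.sqrt_mul' _ hpi.le]
      field_simp
      exact (Real.sq_sqrt hpi.le).symm
    rw [mul_assoc 2, ha, hb, hab]
    push_cast
    field_simp
    ring

/-- The series `∑ₙ ∫_𝔻 |√((n+1)/π)·zⁿ·conj z − (n/√((n+1)π))·z^{n−1}|² dλ(z)` of squared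
`L²`-norms of the images of the orthonormal basis elements `uₙ dz̄` under the canonical
solution operator to `∂̄` converges, with value `∑ₙ 1/((n+1)(n+2)) = 1`; hence the canonical
solution operator restricted to `(0,1)`-forms with holomorphic coefficients on the unit
disc is Hilbert–Schmidt. -/
theorem summable_norm_sq_canonical_solution_disc :
    Summable (fun n : ℕ =>
      ∫ z in Metric.ball (0 : ℂ) 1,
        ‖((Real.sqrt (((n : ℝ) + 1) / Real.pi) : ℂ) * z ^ n * (starRingEnd ℂ) z -
          ((n : ℂ) / (Real.sqrt (((n : ℝ) + 1) * Real.pi) : ℂ)) * z ^ (n - 1))‖ ^ 2) ∧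
    ∑' n : ℕ,
      (∫ z in Metric.ball (0 : ℂ) 1,
        ‖((Real.sqrt (((n : ℝ) + 1) / Real.pi) : ℂ) * z ^ n * (starRingEnd ℂ) z -
          ((n : ℂ) / (Real.sqrt (((n : ℝ) + 1) * Real.pi) : ℂ)) * z ^ (n - 1))‖ ^ 2) = 1 := by
  simp_rw [setIntegral_norm_sq_canonical_solution_disc]
  exact ⟨hasSum_one_div_succ_mul_succ_succ.summable, hasSum_one_div_succ_mul_succ_succ.tsum_eq⟩
end

section
/- For natural numbers m ≠ n, the functions z ↦ z^m·conj(z) − (m/(m+1))·z^{m−1} and z ↦ zⁿ·conj(z) − (n/(n+1))·z^{n−1} are orthogonal in L²(𝔻, λ): ∫_𝔻 (z^m·conj(z) − (m/(m+1)) z^{m−1})·conj( zⁿ·conj(z) − (n/(n+1)) z^{n−1} ) dλ(z) = 0. -/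
/-!
Each function `f_m(z) = z^m·z̄ − (m/(m+1))·z^{m−1}` transforms under a rotation `z ↦ c z`
(`|c| = 1`) by the character `c^m·c̄ = c^{m−1}`, so the integrand `f_m·conj f_n` picks up the
factor `c^{m−n}`. The disc and Lebesgue measure are rotation invariant, hence the integral `I`
satisfies `I = c^{m−n}·I`; choosing `c` with `c^{m−n} ≠ 1` gives `I = 0`.
-/

open MeasureTheory ComplexConjugate

theorem setIntegral_eq_zero_of_circle_mul {E : Type*} [NormedAddCommGroup E]
    [NormedSpace ℂ E] {s : Set ℂ} {c : Circle} (hs : rotation c ⁻¹' s = s) {f : ℂ → E} {k : ℂ}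
    (hk : k ≠ 1) (hf : ∀ z, f (c * z) = k • f z) :
    ∫ z in s, f z = 0 := by
  have hinv := (rotation c).measurePreserving.setIntegral_preimage_emb
    (rotation c).toHomeomorph.measurableEmbedding f s
  simp only [hs, rotation_apply, hf, integral_smul] at hinv
  have : (k - 1) • ∫ z in s, f z = 0 := by rw [sub_smul, hinv, one_smul, sub_self]
  exact (smul_eq_zero.mp this).resolve_left (sub_ne_zero.mpr hk)

theorem rotation_preimage_ball_zero (c : Circle) (r : ℝ) :
    rotation c ⁻¹' Metric.ball 0 r = Metric.ball 0 r := by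
  rw [LinearIsometryEquiv.preimage_ball, map_zero]

theorem Circle.exists_zpow_ne_one {k : ℤ} (hk : k ≠ 0) : ∃ c : Circle, c ^ k ≠ 1 := by
  refine ⟨Circle.exp (Real.pi / k), ?_⟩
  rw [← Circle.exp_intCast_mul, mul_div_cancel₀ _ (Int.cast_ne_zero.mpr hk)]
  exact Circle.exp_pi_ne_one

theorem Circle.coe_zpow_natCast_sub (c : Circle) (m n : ℕ) :
    ((c ^ ((m : ℤ) - n) : Circle) : ℂ) = (c : ℂ) ^ m * conj (c : ℂ) ^ n := by
  rw [zpow_sub, zpow_natCast, zpow_natCast, ← inv_pow, Circle.coe_mul,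
    Circle.coe_pow, Circle.coe_pow, Circle.coe_inv_eq_conj]

theorem Circle.coe_mul_conj (c : Circle) : (c : ℂ) * conj (c : ℂ) = 1 := by
  rw [Complex.mul_conj, Circle.normSq_coe, Complex.ofReal_one]

/-- The image of `z^m dz̄` under the canonical solution operator to `∂̄` on the unit disc. -/
noncomputable def canonicalSolutionMonomial (m : ℕ) (z : ℂ) : ℂ :=
  z ^ m * conj z - ((m : ℂ) / ((m : ℂ) + 1)) * z ^ (m - 1)

theorem canonicalSolutionMonomial_circle_mul (m : ℕ) (c : Circle) (z : ℂ) :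
    canonicalSolutionMonomial m (c * z) =
      ((c : ℂ) ^ m * conj (c : ℂ)) * canonicalSolutionMonomial m z := by
  unfold canonicalSolutionMonomial
  cases m with
  -- for `m = 0` the exponent `m - 1` truncates to `0`, but its coefficient `m / (m + 1)` vanishes
  | zero => simp only [map_mul]; push_cast; ring
  | succ k =>
    have hc := Circle.coe_mul_conj c
    simp only [map_mul, mul_pow, Nat.add_sub_cancel]
    linear_combination
      ((((k + 1 : ℕ) : ℂ) / (((k + 1 : ℕ) : ℂ) + 1)) * (c : ℂ) ^ k * z ^ k) * hc

theorem canonicalSolutionMonomial_mul_conj_circle_mul (m n : ℕ) (c : Circle) (z : ℂ) :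
    canonicalSolutionMonomial m (c * z) * conj (canonicalSolutionMonomial n (c * z)) =
      ((c ^ ((m : ℤ) - n) : Circle) : ℂ) *
        (canonicalSolutionMonomial m z * conj (canonicalSolutionMonomial n z)) := by
  have hc := Circle.coe_mul_conj c
  rw [canonicalSolutionMonomial_circle_mul, canonicalSolutionMonomial_circle_mul,
    Circle.coe_zpow_natCast_sub]
  simp only [map_mul, map_pow, Complex.conj_conj]
  linear_combination ((c : ℂ) ^ m * conj (c : ℂ) ^ n * canonicalSolutionMonomial m z *
    conj (canonicalSolutionMonomial n z)) * hc

/-- For `m ≠ n`, the images `z ↦ z^m·conj z − (m/(m+1))·z^{m−1}` and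
`z ↦ zⁿ·conj z − (n/(n+1))·z^{n−1}` of the basis monomials under the canonical solution
operator are orthogonal in `L²(𝔻)`. -/
theorem canonical_solution_images_orthogonal (m n : ℕ) (hmn : m ≠ n) :
    ∫ z in Metric.ball (0 : ℂ) 1,
      (z ^ m * (starRingEnd ℂ) z - ((m : ℂ) / ((m : ℂ) + 1)) * z ^ (m - 1)) *
      (starRingEnd ℂ) (z ^ n * (starRingEnd ℂ) z - ((n : ℂ) / ((n : ℂ) + 1)) * z ^ (n - 1))
      = 0 := by
  obtain ⟨c, hc⟩ := Circle.exists_zpow_ne_one (k := (m : ℤ) - n)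
    (sub_ne_zero.mpr (Nat.cast_injective.ne hmn))
  exact setIntegral_eq_zero_of_circle_mul (rotation_preimage_ball_zero c 1)
    (Circle.coe_eq_one.not.mpr hc) (canonicalSolutionMonomial_mul_conj_circle_mul m n c)
end

section
/- The double series over all pairs (n₁, n₂) ∈ ℕ² of the quantity ((n₁+1)(n₂+1)/π²)·( ∫_{𝔻²} |conj(z₁) z₁^{n₁} z₂^{n₂} − (n₁/(n₁+1)) z₁^{n₁−1} z₂^{n₂}|² dλ + ∫_{𝔻²} |conj(z₂) z₁^{n₁} z₂^{n₂} − (n₂/(n₂+1)) z₁^{n₁} z₂^{n₂−1}|² dλ ) diverges to infinity; equivalently ∑_{(n₁,n₂)∈ℕ²} ( 1/((n₁+1)(n₁+2)) + 1/((n₂+1)(n₂+2)) ) = ∞. Consequently the canonical solution operator to ∂̄, S₁ : A²_{(0,1)}(𝔻²) → L²(𝔻²), is not a Hilbert–Schmidt operator. -/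
/-!
A summable family tends to zero along every injective sequence of indices, so it suffices that
both families stay `≥ 1/2` along the row `n₁ = 0`. There the correction term of the first
integrand vanishes, and the integral of `|z₁|² |z₂|^(2n₂)` over the bidisc, computed by radial
integration in each factor, is `π² / (2 (n₂ + 1))`, which cancels the prefactor `(n₂ + 1) / π²`.
-/

open MeasureTheory Real Set Metric

theorem Complex.integral_norm_pow_ball (m : ℕ) {r : ℝ} (hr : 0 ≤ r) :
    ∫ z in ball (0 : ℂ) r, ‖z‖ ^ m = 2 * π * r ^ (m + 2) / (m + 2) := by
  have hind : (ball (0 : ℂ) r).indicator (fun z => ‖z‖ ^ m)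
      = fun z => (Iio r).indicator (· ^ m) ‖z‖ := by
    ext z
    simp [indicator]
  have hradial : ∫ y in Ioi (0 : ℝ), y ^ (2 - 1) • (Iio r).indicator (· ^ m) y
      = r ^ (m + 2) / (m + 2) := by
    have hpow : (fun y : ℝ => y ^ (2 - 1) • (Iio r).indicator (· ^ m) y)
        = (Iio r).indicator (· ^ (m + 1)) := by
      ext y
      by_cases hy : y < r <;> simp [hy, pow_succ, mul_comm]
    rw [hpow, setIntegral_indicator measurableSet_Iio, Ioi_inter_Iio,
      ← integral_Ioc_eq_integral_Ioo, ← intervalIntegral.integral_of_le hr, integral_pow]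
    push_cast
    ring
  rw [← integral_indicator measurableSet_ball, hind, integral_fun_norm_addHaar,
    Complex.finrank_real_complex, hradial, measureReal_def, Complex.volume_ball]
  simp only [ENNReal.ofReal_one, one_pow, one_mul, ENNReal.coe_toReal, NNReal.coe_real_pi,
    smul_eq_mul, nsmul_eq_mul, Nat.cast_ofNat]
  ring

theorem integral_norm_pow_mul_norm_pow_ball_prod_ball (a b : ℕ) {r s : ℝ} (hr : 0 ≤ r)
    (hs : 0 ≤ s) :
    ∫ z in ball (0 : ℂ) r ×ˢ ball (0 : ℂ) s, ‖z.1‖ ^ a * ‖z.2‖ ^ b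
      = (2 * π * r ^ (a + 2) / (a + 2)) * (2 * π * s ^ (b + 2) / (b + 2)) := by
  rw [Measure.volume_eq_prod,
    setIntegral_prod_mul (fun z : ℂ => ‖z‖ ^ a) (fun z : ℂ => ‖z‖ ^ b),
    Complex.integral_norm_pow_ball a hr, Complex.integral_norm_pow_ball b hs]

theorem not_summable_of_le_comp_injective {α : Type*} {f : α → ℝ} {g : ℕ → α}
    (hg : Function.Injective g) {c : ℝ} (hc : 0 < c) (hle : ∀ n, c ≤ f (g n)) :
    ¬ Summable f := fun hf =>
  let ⟨n, hn⟩ := ((hf.comp_injective hg).tendsto_atTop_zero.eventually_lt_const hc).exists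
  (hle n).not_gt hn

/-- The sum over all `(n₁,n₂) ∈ ℕ²` of the squared `L²(𝔻²)`-norms of the images of the
orthonormal basis elements `u_{n₁,n₂} dz̄₁`, `u_{n₁,n₂} dz̄₂` of `A²₍₀,₁₎(𝔻²)` under the
canonical solution operator to `∂̄` diverges; equivalently
`∑_{(n₁,n₂)} (1/((n₁+1)(n₁+2)) + 1/((n₂+1)(n₂+2))) = ∞`. Consequently the canonical
solution operator `S₁ : A²₍₀,₁₎(𝔻²) → L²(𝔻²)` is not Hilbert–Schmidt. -/
theorem not_summable_norm_sq_canonical_solution_bidisc :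
    ¬ Summable (fun p : ℕ × ℕ =>
      (((p.1 : ℝ) + 1) * ((p.2 : ℝ) + 1) / Real.pi ^ 2) *
        ((∫ z in Metric.ball (0 : ℂ) 1 ×ˢ Metric.ball (0 : ℂ) 1,
            ‖(starRingEnd ℂ) z.1 * z.1 ^ p.1 * z.2 ^ p.2 -
              ((p.1 : ℂ) / ((p.1 : ℂ) + 1)) * z.1 ^ (p.1 - 1) * z.2 ^ p.2‖ ^ 2) +
         (∫ z in Metric.ball (0 : ℂ) 1 ×ˢ Metric.ball (0 : ℂ) 1,
            ‖(starRingEnd ℂ) z.2 * z.1 ^ p.1 * z.2 ^ p.2 -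
              ((p.2 : ℂ) / ((p.2 : ℂ) + 1)) * z.1 ^ p.1 * z.2 ^ (p.2 - 1)‖ ^ 2))) ∧
    ¬ Summable (fun p : ℕ × ℕ =>
      1 / (((p.1 : ℝ) + 1) * ((p.1 : ℝ) + 2)) + 1 / (((p.2 : ℝ) + 1) * ((p.2 : ℝ) + 2))) := by
  refine ⟨not_summable_of_le_comp_injective (Prod.mk_right_injective 0) one_half_pos fun n => ?_,
    not_summable_of_le_comp_injective (Prod.mk_right_injective 0) one_half_pos fun n => ?_⟩
  · have hfirst : ∫ z in ball (0 : ℂ) 1 ×ˢ ball (0 : ℂ) 1,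
        ‖(starRingEnd ℂ) z.1 * z.1 ^ 0 * z.2 ^ n -
          (((0 : ℕ) : ℂ) / (((0 : ℕ) : ℂ) + 1)) * z.1 ^ (0 - 1) * z.2 ^ n‖ ^ 2
        = π ^ 2 / (n + 1) / 2 := by
      simp only [Nat.cast_zero, zero_div, zero_mul, pow_zero, mul_one, sub_zero, norm_mul,
        norm_pow, Complex.norm_conj, mul_pow, ← pow_mul]
      rw [integral_norm_pow_mul_norm_pow_ball_prod_ball 2 (n * 2) zero_le_one zero_le_one]
      push_cast
      field_simp
      ring
    have hsecond : 0 ≤ ∫ z in ball (0 : ℂ) 1 ×ˢ ball (0 : ℂ) 1,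
        ‖(starRingEnd ℂ) z.2 * z.1 ^ 0 * z.2 ^ n -
          ((n : ℂ) / ((n : ℂ) + 1)) * z.1 ^ 0 * z.2 ^ (n - 1)‖ ^ 2 :=
      integral_nonneg fun z => by positivity
    calc (1 : ℝ) / 2
        = (((0 : ℕ) : ℝ) + 1) * ((n : ℝ) + 1) / π ^ 2 * (π ^ 2 / (n + 1) / 2) := by
          rw [Nat.cast_zero, zero_add, one_mul]
          field_simp
      _ ≤ _ := by
          rw [← hfirst]
          exact mul_le_mul_of_nonneg_left (le_add_of_nonneg_right hsecond) (by positivity)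
  · norm_num
    positivity
end

section
/- The double series over all pairs (n₁, n₂) ∈ ℕ² of ((n₂+2) + (n₁+2))/((n₁+n₂+2)(n₁+n₂+3)) diverges to infinity; equivalently, the sum over the orthonormal basis { U_{n₁,n₂} dz̄₁, U_{n₁,n₂} dz̄₂ } of A²_{(0,1)}(𝔹²) of the squared L²(𝔹²)-norms of the images under the canonical solution operator to ∂̄, namely ∑_{(n₁,n₂)} ((n₁+n₂+2)!/(π² n₁! n₂!))·( ∫_{𝔹²} |conj(z₁) z₁^{n₁} z₂^{n₂} − (n₁/(n₁+n₂+2)) z₁^{n₁−1} z₂^{n₂}|² dλ + ∫_{𝔹²} |conj(z₂) z₁^{n₁} z₂^{n₂} − (n₂/(n₁+n₂+2)) z₁^{n₁} z₂^{n₂−1}|² dλ ) = ∞. Consequently the canonical solution operator to ∂̄, S₁ : A²_{(0,1)}(𝔹²) → L²(𝔹²), is not a Hilbert–Schmidt operator. -/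
/-!
Both series already diverge along the row `n₂ = 0`. There the first series has terms
`≥ 1/(n+3)`. In the second, the `dz̄₂`-part of the `(n, 0)` term is
`(n+2)!/(π² n!) · ∫_{𝔹²} |z₁|^{2n} |z₂|² dλ`. Restrict the integral to the product of annuli
`{1 - 2t ≤ |z₁|² < 1 - t} × {t/2 ≤ |z₂|² < t} ⊆ 𝔹²` of volume `π² t²/2`, with `t = 1/(4(n+1))`:
there the integrand is `≥ (t/2)(1 - 2t)ⁿ ≥ t/4` by Bernoulli's inequality, so the term is
`≥ 1/(512(n+1))`, and a harmonic series diverges.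
-/

open MeasureTheory Real Metric

def unitBall2 : Set (ℂ × ℂ) := {z | ‖z.1‖ ^ 2 + ‖z.2‖ ^ 2 < 1}

def annulusSq (a b : ℝ) : Set ℂ := {w | a ≤ ‖w‖ ^ 2 ∧ ‖w‖ ^ 2 < b}

lemma annulusSq_eq_ball_sdiff_ball (a b : ℝ) : annulusSq a b = ball 0 √b \ ball 0 √a := by
  ext w
  simp only [annulusSq, Set.mem_ofPred_eq, Set.mem_sdiff, mem_ball_zero_iff,
    Real.lt_sqrt (norm_nonneg w), not_lt]
  exact and_comm

lemma measurableSet_annulusSq (a b : ℝ) : MeasurableSet (annulusSq a b) := by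
  rw [annulusSq_eq_ball_sdiff_ball]
  exact measurableSet_ball.diff measurableSet_ball

lemma volume_annulusSq {a b : ℝ} (ha : 0 ≤ a) (hab : a ≤ b) :
    volume (annulusSq a b) = ENNReal.ofReal (π * (b - a)) := by
  have hsq (x : ℝ) (hx : 0 ≤ x) : ENNReal.ofReal √x ^ 2 = ENNReal.ofReal x := by
    rw [← ENNReal.ofReal_pow (sqrt_nonneg x), sq_sqrt hx]
  rw [annulusSq_eq_ball_sdiff_ball, measure_sdiff (ball_subset_ball (sqrt_le_sqrt hab))
      measurableSet_ball.nullMeasurableSet measure_ball_lt_top.ne,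
    Complex.volume_ball, Complex.volume_ball, hsq a ha, hsq b (ha.trans hab),
    ← ENNReal.ofReal_coe_nnreal, NNReal.coe_real_pi, ← ENNReal.ofReal_mul (ha.trans hab),
    ← ENNReal.ofReal_mul ha, ← ENNReal.ofReal_sub _ (by positivity)]
  ring_nf

lemma prod_annulusSq_subset_unitBall2 {a b c d : ℝ} (hbd : b + d ≤ 1) :
    annulusSq a b ×ˢ annulusSq c d ⊆ unitBall2 := fun z ⟨h₁, h₂⟩ => by
  change ‖z.1‖ ^ 2 + ‖z.2‖ ^ 2 < 1
  linarith [h₁.2, h₂.2]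

lemma integrableOn_unitBall2 {f : ℂ × ℂ → ℝ} (hf : Continuous f) : IntegrableOn f unitBall2 := by
  refine (hf.continuousOn.integrableOn_compact (isCompact_closedBall 0 1)).mono_set fun z hz => ?_
  have hz : ‖z.1‖ ^ 2 + ‖z.2‖ ^ 2 < 1 := hz
  rw [mem_closedBall_zero_iff, norm_prod_le_iff]
  constructor <;> nlinarith [norm_nonneg z.1, norm_nonneg z.2]

lemma le_setIntegral_unitBall2_pow_mul_pow (m k : ℕ) {t : ℝ} (ht₀ : 0 ≤ t) (ht : t ≤ 1 / 2) :
    π ^ 2 * t ^ 2 / 2 * ((1 - 2 * t) ^ m * (t / 2) ^ k) ≤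
      ∫ z in unitBall2, (‖z.1‖ ^ 2) ^ m * (‖z.2‖ ^ 2) ^ k := by
  set D := annulusSq (1 - 2 * t) (1 - t) ×ˢ annulusSq (t / 2) t
  have hD : volume D = ENNReal.ofReal (π ^ 2 * t ^ 2 / 2) := by
    rw [Measure.volume_eq_prod, Measure.prod_prod, volume_annulusSq (by linarith) (by linarith),
      volume_annulusSq (by linarith) (by linarith), ← ENNReal.ofReal_mul (by nlinarith [pi_pos])]
    ring_nf
  have hlow : ∀ z ∈ D, (1 - 2 * t) ^ m * (t / 2) ^ k ≤ (‖z.1‖ ^ 2) ^ m * (‖z.2‖ ^ 2) ^ k :=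
    fun z ⟨h₁, h₂⟩ => by
      gcongr
      · linarith
      · exact h₁.1
      · exact h₂.1
  have hint : IntegrableOn (fun z : ℂ × ℂ => (‖z.1‖ ^ 2) ^ m * (‖z.2‖ ^ 2) ^ k) unitBall2 :=
    integrableOn_unitBall2 (by fun_prop)
  have hsub : D ⊆ unitBall2 := prod_annulusSq_subset_unitBall2 (by linarith)
  calc π ^ 2 * t ^ 2 / 2 * ((1 - 2 * t) ^ m * (t / 2) ^ k)
      = (1 - 2 * t) ^ m * (t / 2) ^ k * volume.real D := by
        rw [measureReal_def, hD, ENNReal.toReal_ofReal (by positivity)]; ring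
    _ ≤ ∫ z in D, (‖z.1‖ ^ 2) ^ m * (‖z.2‖ ^ 2) ^ k :=
        setIntegral_ge_of_const_le_real
          ((measurableSet_annulusSq _ _).prod (measurableSet_annulusSq _ _))
          (by rw [hD]; exact ENNReal.ofReal_ne_top) hlow (hint.mono_set hsub)
    _ ≤ ∫ z in unitBall2, (‖z.1‖ ^ 2) ^ m * (‖z.2‖ ^ 2) ^ k :=
        setIntegral_mono_set hint (ae_of_all _ fun z => by positivity) hsub.eventuallyLE

lemma half_le_one_sub_pow (n : ℕ) : 1 / 2 ≤ (1 - 1 / (2 * ((n : ℝ) + 1))) ^ n := by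
  have hn : (0 : ℝ) < n + 1 := by positivity
  have bernoulli := one_add_mul_le_pow (a := -(1 / (2 * ((n : ℝ) + 1))))
    (by rw [neg_le_neg_iff, div_le_iff₀ (by positivity)]; nlinarith) n
  rw [← sub_eq_add_neg] at bernoulli
  refine le_trans ?_ bernoulli
  rw [mul_neg, ← sub_eq_add_neg, le_sub_comm, mul_one_div, div_le_iff₀ (by positivity)]
  linarith

lemma pi_sq_div_le_setIntegral_unitBall2_pow (n : ℕ) :
    π ^ 2 / (512 * ((n : ℝ) + 1) ^ 3) ≤ ∫ z in unitBall2, (‖z.1‖ ^ 2) ^ n * (‖z.2‖ ^ 2) ^ 1 := by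
  have hn : (0 : ℝ) < n + 1 := by positivity
  set t : ℝ := 1 / (4 * ((n : ℝ) + 1)) with ht
  have h2t : 1 - 2 * t = 1 - 1 / (2 * ((n : ℝ) + 1)) := by rw [ht]; field_simp; ring
  refine le_trans ?_ (le_setIntegral_unitBall2_pow_mul_pow n 1 (t := t) (by positivity)
    (by rw [div_le_div_iff₀ (by positivity) two_pos]; linarith))
  rw [h2t]
  calc π ^ 2 / (512 * ((n : ℝ) + 1) ^ 3) = π ^ 2 * t ^ 2 / 2 * (1 / 2 * (t / 2) ^ 1) := by
        rw [ht]; field_simp; ring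
    _ ≤ _ := by gcongr; exact half_le_one_sub_pow n

noncomputable def normSqCanonicalSolution (p : ℕ × ℕ) : ℝ :=
  ((Nat.factorial (p.1 + p.2 + 2) : ℝ) /
      (Real.pi ^ 2 * (Nat.factorial p.1) * (Nat.factorial p.2))) *
    ((∫ z in unitBall2,
        ‖((starRingEnd ℂ) z.1 * z.1 ^ p.1 * z.2 ^ p.2 -
          ((p.1 : ℂ) / ((p.1 : ℂ) + (p.2 : ℂ) + 2)) * z.1 ^ (p.1 - 1) * z.2 ^ p.2)‖ ^ 2) +
     (∫ z in unitBall2,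
        ‖((starRingEnd ℂ) z.2 * z.1 ^ p.1 * z.2 ^ p.2 -
          ((p.2 : ℂ) / ((p.1 : ℂ) + (p.2 : ℂ) + 2)) * z.1 ^ p.1 * z.2 ^ (p.2 - 1))‖ ^ 2))

lemma div_le_normSqCanonicalSolution_row_zero (n : ℕ) :
    1 / 512 / ((n : ℝ) + 1) ≤ normSqCanonicalSolution (n, 0) := by
  have hn : (0 : ℝ) < n + 1 := by positivity
  have hfact : ((n + 2).factorial : ℝ) = (n + 2) * (n + 1) * n.factorial := by
    push_cast [Nat.factorial_succ]; ring
  have hintegrand (z : ℂ × ℂ) : ‖(starRingEnd ℂ) z.2 * z.1 ^ n‖ ^ 2 =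
      (‖z.1‖ ^ 2) ^ n * (‖z.2‖ ^ 2) ^ 1 := by
    simp only [norm_mul, norm_pow, Complex.norm_conj]; ring
  simp only [normSqCanonicalSolution, Nat.cast_zero, zero_div, zero_mul, sub_zero, pow_zero,
    mul_one, add_zero, Nat.factorial_zero, Nat.cast_one, hintegrand, hfact]
  set C : ℝ := (n + 2) * (n + 1) * n.factorial / (π ^ 2 * n.factorial) with hC_def
  have hC : C * (π ^ 2 / (512 * ((n : ℝ) + 1) ^ 3)) = (n + 2) / (512 * (n + 1) ^ 2) := by
    have := pi_pos
    rw [hC_def]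
    field_simp
  calc 1 / 512 / ((n : ℝ) + 1) ≤ (n + 2) / (512 * (n + 1) ^ 2) := by
        rw [div_div, div_le_div_iff₀ (by positivity) (by positivity)]; nlinarith
    _ = C * (π ^ 2 / (512 * ((n : ℝ) + 1) ^ 3)) := hC.symm
    _ ≤ C * ∫ z in unitBall2, (‖z.1‖ ^ 2) ^ n * (‖z.2‖ ^ 2) ^ 1 := by
        gcongr; exact pi_sq_div_le_setIntegral_unitBall2_pow n
    _ ≤ _ := by
        gcongr; exact le_add_of_nonneg_left (integral_nonneg fun z => by positivity)

lemma not_summable_of_div_add_le {f : ℕ → ℝ} {c : ℝ} (k : ℕ) (hc : 0 < c)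
    (hf : ∀ n : ℕ, c / (n + k) ≤ f n) : ¬ Summable f := fun hsum => by
  have hbound : Summable fun n : ℕ => c / (n + k) :=
    Summable.of_nonneg_of_le (fun n => by positivity) hf hsum
  have hshift : Summable fun n : ℕ => 1 / ((n + k : ℕ) : ℝ) := by
    simpa [div_div_cancel_left' hc.ne'] using hbound.div_const c
  exact Real.not_summable_one_div_natCast ((summable_nat_add_iff k).mp hshift)

/-- The series `∑_{(n₁,n₂)∈ℕ²} ((n₂+2)+(n₁+2))/((n₁+n₂+2)(n₁+n₂+3))` diverges; equivalently,
the sum over the orthonormal basis `{U_{n₁,n₂} dz̄₁, U_{n₁,n₂} dz̄₂}` of `A²₍₀,₁₎(𝔹²)` of the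
squared `L²(𝔹²)`-norms of the images under the canonical solution operator to `∂̄` is
infinite. Consequently the canonical solution operator `S₁ : A²₍₀,₁₎(𝔹²) → L²(𝔹²)` is not
Hilbert–Schmidt. -/
theorem not_summable_norm_sq_canonical_solution_ball :
    ¬ Summable (fun p : ℕ × ℕ =>
      (((p.2 : ℝ) + 2) + ((p.1 : ℝ) + 2)) /
        ((((p.1 : ℝ) + (p.2 : ℝ)) + 2) * (((p.1 : ℝ) + (p.2 : ℝ)) + 3))) ∧
    ¬ Summable (fun p : ℕ × ℕ =>
      ((Nat.factorial (p.1 + p.2 + 2) : ℝ) /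
          (Real.pi ^ 2 * (Nat.factorial p.1) * (Nat.factorial p.2))) *
        ((∫ z in {z : ℂ × ℂ | ‖z.1‖ ^ 2 + ‖z.2‖ ^ 2 < 1},
            ‖((starRingEnd ℂ) z.1 * z.1 ^ p.1 * z.2 ^ p.2 -
              ((p.1 : ℂ) / ((p.1 : ℂ) + (p.2 : ℂ) + 2)) * z.1 ^ (p.1 - 1) * z.2 ^ p.2)‖ ^ 2) +
         (∫ z in {z : ℂ × ℂ | ‖z.1‖ ^ 2 + ‖z.2‖ ^ 2 < 1},
            ‖((starRingEnd ℂ) z.2 * z.1 ^ p.1 * z.2 ^ p.2 -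
              ((p.2 : ℂ) / ((p.1 : ℂ) + (p.2 : ℂ) + 2)) * z.1 ^ p.1 * z.2 ^ (p.2 - 1))‖ ^ 2))) := by
  refine ⟨fun h => ?_, fun h => ?_⟩
  · refine not_summable_of_div_add_le 3 one_pos (fun n => ?_)
      (h.comp_injective (Prod.mk_left_injective 0))
    simp only [Function.comp_apply, Nat.cast_zero, add_zero, Nat.cast_ofNat]
    rw [div_le_div_iff₀ (by positivity) (by positivity)]
    nlinarith
  · change Summable normSqCanonicalSolution at h
    refine not_summable_of_div_add_le 1 (by norm_num : (0 : ℝ) < 1 / 512) (fun n => ?_)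
      (h.comp_injective (Prod.mk_left_injective 0))
    simpa using div_le_normSqCanonicalSolution_row_zero n
end

section
/- The function K((z₁,z₂),(w₁,w₂)) = (|z₁−w₁|² + |z₂−w₂|²)/( |1 − z₁·conj(w₁)|⁴ · |1 − z₂·conj(w₂)|⁴ ) does not belong to L²(𝔻² × 𝔻²), i.e. ∫_{𝔻²×𝔻²} K(z,w)² dλ(z) dλ(w) = ∞. -/
/-!
Take `z₁, w₁` in a disc of radius `t` internally tangent to the unit circle at `1`, and
`z₂, w₂` in two fixed disjoint discs. Then `|1 - z₁ w̄₁| ≤ 4t`, the second denominator stays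
bounded and the numerator stays bounded below, so `K² ≳ t⁻⁸` on a set of measure `≍ t⁴`.
Hence the integral of `K²` is at least a constant times `t⁻⁴` for every `t ∈ (0, 1]`.
-/

open MeasureTheory Metric Filter Topology Set ComplexConjugate

namespace Complex

theorem norm_one_sub_mul_conj_le_add {z : ℂ} (hz : ‖z‖ ≤ 1) (w : ℂ) :
    ‖1 - z * conj w‖ ≤ ‖1 - z‖ + ‖1 - w‖ :=
  calc ‖1 - z * conj w‖ = ‖(1 - z) + z * conj (1 - w)‖ := by
        simp only [map_sub, map_one]; ring_nf
    _ ≤ ‖1 - z‖ + ‖z‖ * ‖1 - w‖ := by grw [norm_add_le, norm_mul, norm_conj]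
    _ ≤ ‖1 - z‖ + ‖1 - w‖ := by gcongr; exact mul_le_of_le_one_left (norm_nonneg _) hz

theorem norm_one_sub_mul_conj_le_two {z w : ℂ} (hz : ‖z‖ ≤ 1) (hw : ‖w‖ ≤ 1) :
    ‖1 - z * conj w‖ ≤ 2 :=
  calc ‖1 - z * conj w‖ ≤ ‖(1 : ℂ)‖ + ‖z‖ * ‖w‖ := by grw [norm_sub_le, norm_mul, norm_conj]
    _ ≤ 2 := by rw [norm_one]; nlinarith [norm_nonneg z]

theorem norm_one_sub_mul_conj_pos {z w : ℂ} (hz : ‖z‖ < 1) (hw : ‖w‖ ≤ 1) :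
    0 < ‖1 - z * conj w‖ :=
  calc 0 < ‖(1 : ℂ)‖ - ‖z‖ * ‖w‖ := by
        rw [norm_one, sub_pos]; exact mul_lt_one_of_nonneg_of_lt_one_left (norm_nonneg z) hz hw
    _ ≤ ‖1 - z * conj w‖ := by rw [← norm_conj w, ← norm_mul]; exact norm_sub_norm_le _ _

theorem ball_one_sub_subset_ball_zero {t : ℝ} (ht : t ≤ 1) :
    ball (1 - t : ℂ) t ⊆ ball 0 1 := by
  refine ball_subset_ball' ?_
  rw [dist_zero_right, ← ofReal_one, ← ofReal_sub, norm_real, Real.norm_of_nonneg (by linarith)]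
  linarith

theorem ball_one_sub_subset_ball_one {t : ℝ} (ht₀ : 0 ≤ t) :
    ball (1 - t : ℂ) t ⊆ ball 1 (2 * t) := by
  refine ball_subset_ball' ?_
  rw [dist_eq, sub_sub_cancel_left, norm_neg, norm_real, Real.norm_of_nonneg ht₀]
  linarith

end Complex

theorem ENNReal.eq_top_of_forall_ofReal_div_pow_le {x : ENNReal} {C : ℝ} {n : ℕ} (hC : 0 < C)
    (hn : n ≠ 0) (h : ∀ t ∈ Ioc (0 : ℝ) 1, ENNReal.ofReal (C / t ^ n) ≤ x) : x = ⊤ := by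
  have hlim : Tendsto (fun t : ℝ ↦ ENNReal.ofReal (C / t ^ n)) (𝓝[>] 0) (𝓝 ⊤) := by
    simp only [div_eq_mul_inv, ← inv_pow]
    exact ENNReal.tendsto_ofReal_atTop.comp
      (((tendsto_pow_atTop hn).comp tendsto_inv_nhdsGT_zero).const_mul_atTop hC)
  exact top_le_iff.1 (le_of_tendsto hlim (eventually_of_mem (Ioc_mem_nhdsGT one_pos) h))

open Complex

noncomputable def bidiscKernel (z w : ℂ × ℂ) : ℝ :=
  (‖z.1 - w.1‖ ^ 2 + ‖z.2 - w.2‖ ^ 2) / (‖1 - z.1 * conj w.1‖ ^ 4 * ‖1 - z.2 * conj w.2‖ ^ 4)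

theorem div_le_bidiscKernel {z w : ℂ × ℂ} (hz₁ : ‖z.1‖ < 1) (hw₁ : ‖w.1‖ ≤ 1)
    (hz₂ : ‖z.2‖ < 1) (hw₂ : ‖w.2‖ ≤ 1) :
    ‖z.2 - w.2‖ ^ 2 / (16 * ‖1 - z.1 * conj w.1‖ ^ 4) ≤ bidiscKernel z w := by
  have h₁ := norm_one_sub_mul_conj_pos hz₁ hw₁
  have h₂ := norm_one_sub_mul_conj_pos hz₂ hw₂
  rw [bidiscKernel, mul_comm 16]
  gcongr ?_ / (_ * ?_)
  · exact le_add_of_nonneg_left (sq_nonneg _)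
  · calc ‖1 - z.2 * conj w.2‖ ^ 4 ≤ 2 ^ 4 := by
          gcongr; exact norm_one_sub_mul_conj_le_two hz₂.le hw₂
      _ = 16 := by norm_num

def peakRegion (t : ℝ) : Set ((ℂ × ℂ) × ℂ × ℂ) :=
  (ball (1 - t : ℂ) t ×ˢ ball (0 : ℂ) (1 / 4)) ×ˢ
    (ball (1 - t : ℂ) t ×ˢ ball (3 / 4 : ℂ) (1 / 4))

theorem measurableSet_peakRegion (t : ℝ) : MeasurableSet (peakRegion t) := by
  unfold peakRegion; measurability

theorem peakRegion_subset {t : ℝ} (ht : t ≤ 1) :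
    peakRegion t ⊆ (ball 0 1 ×ˢ ball 0 1) ×ˢ (ball 0 1 ×ˢ ball 0 1) := by
  have hsmall : ∀ c : ℂ, ‖c‖ ≤ 3 / 4 → ball c (1 / 4) ⊆ ball 0 1 := fun c hc ↦
    ball_subset_ball' (by rw [dist_zero_right]; linarith)
  have h := ball_one_sub_subset_ball_zero ht
  exact Set.prod_mono (Set.prod_mono h (hsmall 0 (by norm_num)))
    (Set.prod_mono h (hsmall _ (by norm_num)))

theorem volume_peakRegion {t : ℝ} (ht : 0 ≤ t) :
    volume (peakRegion t) = ENNReal.ofReal (Real.pi ^ 4 * t ^ 4 / 2 ^ 8) := by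
  rw [peakRegion, Measure.volume_eq_prod, Measure.prod_prod, Measure.volume_eq_prod,
    Measure.prod_prod, Measure.prod_prod]
  simp only [Complex.volume_ball, ← ENNReal.ofReal_coe_nnreal, NNReal.coe_real_pi]
  rw [← ENNReal.ofReal_pow ht, ← ENNReal.ofReal_pow (by norm_num),
    ← ENNReal.ofReal_mul (by positivity), ← ENNReal.ofReal_mul (by positivity),
    ← ENNReal.ofReal_mul (by positivity), ← ENNReal.ofReal_mul (by positivity)]
  congr 1; ring

theorem le_bidiscKernel_of_mem_peakRegion {t : ℝ} (ht₀ : 0 < t) (ht₁ : t ≤ 1)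
    {p : (ℂ × ℂ) × ℂ × ℂ} (hp : p ∈ peakRegion t) :
    1 / (2 ^ 16 * t ^ 4) ≤ bidiscKernel p.1 p.2 := by
  obtain ⟨⟨hz₁, hz₂⟩, hw₁, hw₂⟩ := hp
  have hdisc := peakRegion_subset ht₁ ⟨⟨hz₁, hz₂⟩, hw₁, hw₂⟩
  simp only [mem_prod, mem_ball_zero_iff] at hdisc
  have hsep : 1 / 4 ≤ ‖p.1.2 - p.2.2‖ := by
    have h : dist (0 : ℂ) (3 / 4) = 3 / 4 := by norm_num [dist_eq_norm]
    rw [mem_ball'] at hz₂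
    rw [mem_ball] at hw₂
    rw [← dist_eq_norm]
    linarith [dist_triangle4 (0 : ℂ) p.1.2 p.2.2 (3 / 4)]
  have hnear : ‖1 - p.1.1 * conj p.2.1‖ ≤ 4 * t := by
    have h₁ := ball_one_sub_subset_ball_one ht₀.le hz₁
    have h₂ := ball_one_sub_subset_ball_one ht₀.le hw₁
    rw [mem_ball_iff_norm'] at h₁ h₂
    linarith [norm_one_sub_mul_conj_le_add hdisc.1.1.le p.2.1]
  calc 1 / (2 ^ 16 * t ^ 4) = (1 / 4) ^ 2 / (16 * (4 * t) ^ 4) := by ring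
    _ ≤ ‖p.1.2 - p.2.2‖ ^ 2 / (16 * ‖1 - p.1.1 * conj p.2.1‖ ^ 4) := by
      gcongr
      have := norm_one_sub_mul_conj_pos hdisc.1.1 hdisc.2.1.le
      positivity
    _ ≤ bidiscKernel p.1 p.2 :=
      div_le_bidiscKernel hdisc.1.1 hdisc.2.1.le hdisc.1.2 hdisc.2.2.le

theorem ofReal_le_setLIntegral_peakRegion {t : ℝ} (ht₀ : 0 < t) (ht₁ : t ≤ 1) :
    ENNReal.ofReal (Real.pi ^ 4 / 2 ^ 40 / t ^ 4) ≤
      ∫⁻ p in peakRegion t, ENNReal.ofReal (bidiscKernel p.1 p.2 ^ 2) :=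
  calc ENNReal.ofReal (Real.pi ^ 4 / 2 ^ 40 / t ^ 4)
      = ENNReal.ofReal ((1 / (2 ^ 16 * t ^ 4)) ^ 2) * volume (peakRegion t) := by
        rw [volume_peakRegion ht₀.le, ← ENNReal.ofReal_mul (by positivity)]
        congr 1; field_simp
    _ = ∫⁻ _ in peakRegion t, ENNReal.ofReal ((1 / (2 ^ 16 * t ^ 4)) ^ 2) :=
        (setLIntegral_const _ _).symm
    _ ≤ ∫⁻ p in peakRegion t, ENNReal.ofReal (bidiscKernel p.1 p.2 ^ 2) :=
        setLIntegral_mono' (measurableSet_peakRegion t) fun _ hp ↦ ENNReal.ofReal_le_ofReal <|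
          pow_le_pow_left₀ (by positivity) (le_bidiscKernel_of_mem_peakRegion ht₀ ht₁ hp) 2

/-- The kernel `K(z,w) = (|z₁−w₁|² + |z₂−w₂|²)/(|1 − z₁·conj w₁|⁴·|1 − z₂·conj w₂|⁴)` is not
square integrable over `𝔻² × 𝔻²`: the integral of `K²` over `𝔻² × 𝔻²` is infinite. -/
theorem bidisc_kernel_not_sq_integrable :
    ∫⁻ p in ((Metric.ball (0 : ℂ) 1 ×ˢ Metric.ball (0 : ℂ) 1) ×ˢ
        (Metric.ball (0 : ℂ) 1 ×ˢ Metric.ball (0 : ℂ) 1)),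
      ENNReal.ofReal
        (((‖p.1.1 - p.2.1‖ ^ 2 + ‖p.1.2 - p.2.2‖ ^ 2) /
          (‖1 - p.1.1 * (starRingEnd ℂ) p.2.1‖ ^ 4 *
            ‖1 - p.1.2 * (starRingEnd ℂ) p.2.2‖ ^ 4)) ^ 2) = ⊤ :=
  ENNReal.eq_top_of_forall_ofReal_div_pow_le (by positivity) four_ne_zero fun _ ⟨ht₀, ht₁⟩ ↦
    (ofReal_le_setLIntegral_peakRegion ht₀ ht₁).trans
      (lintegral_mono_set (peakRegion_subset ht₁))
end
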